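/- arXiv:2008.02140 — 2 statements merged into one kernel-verified Lean document; each statement's English description precedes it below -/
import Mathlib

section
/- Soundness of flexible coSLD resolution with respect to the declarative semantics: for every logic program with coclauses (P,coP), every finite sequence G of finite atoms and all finite sets of equations E, E', if the operational semantics judgment P;coP ⊢ ∅ : ⟨G | E⟩ ⇒ E' is derivable, then sol(E') ⊆ Ans(G, E, FlexCo(P,coP)), i.e. every solution of the output equations is an answer to the goal ⟨G | E⟩ correct in the declarative semantics FlexCo(P,coP). -/
/- Framework: flexible coinductive logic programming (logic programs with coclauses).
   Terms are possibly infinite trees, modelled as M-types of a polynomial functor. -/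

namespace FlexLP

/-- A first-order signature: function symbols and predicate symbols, each with an arity.
Variables are represented by natural numbers (a countably infinite set). -/
structure Sig where
  Func : Type
  far : Func → ℕ
  Pred : Type
  par : Pred → ℕ

/-- Polynomial functor whose M-type is the type of possibly infinite terms:
nodes are labelled by function symbols (with `far` children) or variables (no children). -/
def TermP (S : Sig) : PFunctor :=
  ⟨S.Func ⊕ ℕ, fun l => Fin (match l with | Sum.inl f => S.far f | Sum.inr _ => 0)⟩

/-- Possibly infinite terms over the signature `S`. -/
def Term (S : Sig) : Type := (TermP S).M

/-- The term consisting of a single variable `x`. -/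
def Term.var (S : Sig) (x : ℕ) : Term S :=
  PFunctor.M.mk ⟨Sum.inr x, fun i => i.elim0⟩

/-- The variable `x` occurs in the term `t`. -/
inductive Term.Occurs (S : Sig) (x : ℕ) : Term S → Prop
  | root (t : Term S) (h : (PFunctor.M.dest t).1 = Sum.inr x) : Term.Occurs S x t
  | child (t : Term S) (i : (TermP S).B (PFunctor.M.dest t).1)
      (h : Term.Occurs S x ((PFunctor.M.dest t).2 i)) : Term.Occurs S x t

/-- The term `t` is finite (syntactic): all its branches are finite. -/
inductive Term.IsFinite (S : Sig) : Term S → Prop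
  | mk (t : Term S) (h : ∀ i, Term.IsFinite S ((PFunctor.M.dest t).2 i)) : Term.IsFinite S t

/-- The term `t` is ground: no variable occurs in it. -/
def Term.Ground (S : Sig) (t : Term S) : Prop := ∀ x, ¬ Term.Occurs S x t

/-- A substitution: a map from a finite set of variables to terms. -/
structure Subst (S : Sig) where
  toFun : ℕ → Option (Term S)
  finDom : {x | (toFun x).isSome}.Finite

/-- Domain of a substitution. -/
def Subst.dom {S : Sig} (σ : Subst S) : Set ℕ := {x | (σ.toFun x).isSome}

/-- A substitution is ground if all its values are ground terms. -/
def Subst.Ground {S : Sig} (σ : Subst S) : Prop :=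
  ∀ x t, σ.toFun x = some t → Term.Ground S t

/-- `σ ⊑ θ` : `dom σ ⊆ dom θ` and the two substitutions agree on `dom σ`. -/
def Subst.le {S : Sig} (σ θ : Subst S) : Prop :=
  ∀ x t, σ.toFun x = some t → θ.toFun x = some t

/-- One step of (simultaneous) substitution application, as a coalgebra.
The boolean flag records whether we are still in the original term (`true`)
or inside a substituted term (`false`). -/
def substStep (S : Sig) (σ : Subst S) : Term S × Bool → (TermP S).Obj (Term S × Bool) :=
  fun p =>
    match PFunctor.M.dest p.1, p.2 with
    | ⟨Sum.inl f, ch⟩, b => ⟨Sum.inl f, fun i => (ch i, b)⟩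
    | ⟨Sum.inr x, ch⟩, true =>
        match σ.toFun x with
        | some s =>
            match PFunctor.M.dest s with
            | ⟨l, ch'⟩ => ⟨l, fun i => (ch' i, false)⟩
        | none => ⟨Sum.inr x, fun i => (ch i, true)⟩
    | ⟨Sum.inr x, ch⟩, false => ⟨Sum.inr x, fun i => (ch i, false)⟩

/-- Application `tσ` of a substitution to a term. -/
def Term.subst {S : Sig} (t : Term S) (σ : Subst S) : Term S :=
  PFunctor.M.corec (substStep S σ) (t, true)

/-- Atoms: a predicate symbol applied to terms (a possibly infinite tree whose
root is labelled by a predicate symbol). -/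
structure Atom (S : Sig) where
  pred : S.Pred
  args : Fin (S.par pred) → Term S

/-- The variable `x` occurs in the atom `A`. -/
def Atom.Occurs {S : Sig} (x : ℕ) (A : Atom S) : Prop := ∃ i, Term.Occurs S x (A.args i)

/-- Ground atoms. The set of all ground atoms is the complete Herbrand base. -/
def Atom.Ground {S : Sig} (A : Atom S) : Prop := ∀ i, Term.Ground S (A.args i)

/-- Finite (syntactic) atoms. -/
def Atom.IsFinite {S : Sig} (A : Atom S) : Prop := ∀ i, Term.IsFinite S (A.args i)

/-- Application of a substitution to an atom. -/
def Atom.subst {S : Sig} (A : Atom S) (σ : Subst S) : Atom S :=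
  ⟨A.pred, fun i => Term.subst (A.args i) σ⟩

/-- A (definite) clause `head :- body`, made of finite atoms. -/
structure Clause (S : Sig) where
  head : Atom S
  body : List (Atom S)
  finHead : head.IsFinite
  finBody : ∀ B ∈ body, B.IsFinite

/-- Variables occurring in a clause. -/
def clauseVars {S : Sig} (C : Clause S) : Set ℕ :=
  {x | Atom.Occurs x C.head ∨ ∃ B ∈ C.body, Atom.Occurs x B}

/-- `Ground P` : the ground instances of clauses of `P`, viewed as inference rules
(pairs premises/conclusion) on the complete Herbrand base. -/
def GroundInst {S : Sig} (P : Set (Clause S)) : Set (Atom S × List (Atom S)) :=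
  {r | ∃ C ∈ P, ∃ σ : Subst S, σ.Ground ∧
        r.1 = C.head.subst σ ∧ r.2 = C.body.map (fun B => B.subst σ) ∧
        r.1.Ground ∧ ∀ B ∈ r.2, B.Ground}

/-- The (one step) inference operator `T_P` associated to a program. -/
def TP {S : Sig} (P : Set (Clause S)) (I : Set (Atom S)) : Set (Atom S) :=
  {A | ∃ r ∈ GroundInst P, r.1 = A ∧ ∀ B ∈ r.2, B ∈ I}

/-- `I` is a model of `P`. -/
def IsModel {S : Sig} (P : Set (Clause S)) (I : Set (Atom S)) : Prop := TP P I ⊆ I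

/-- `I` is a comodel of `P`. -/
def IsComodel {S : Sig} (P : Set (Clause S)) (I : Set (Atom S)) : Prop := I ⊆ TP P I

/-- `Ind P` : the inductive declarative semantics, i.e. the least model of `P`. -/
def Ind {S : Sig} (P : Set (Clause S)) : Set (Atom S) := ⋂₀ {I | IsModel P I}

/-- `FlexCo (P,coP)` : the declarative semantics of a logic program with coclauses,
i.e. the largest comodel of `P` included in `Ind (P ∪ coP)` (union of all such comodels). -/
def FlexCo {S : Sig} (P coP : Set (Clause S)) : Set (Atom S) :=
  ⋃₀ {I | IsComodel P I ∧ I ⊆ Ind (P ∪ coP)}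

/-- `FlexReg (P,coP)` : the regular declarative semantics, i.e. the union of all
finite comodels of `P` included in `Ind (P ∪ coP)`. -/
def FlexReg {S : Sig} (P coP : Set (Clause S)) : Set (Atom S) :=
  ⋃₀ {I | I.Finite ∧ IsComodel P I ∧ I ⊆ Ind (P ∪ coP)}

/-- An equation `s ≐ t` between terms. -/
abbrev Eqn (S : Sig) := Term S × Term S

/-- Variables occurring in a set of equations. -/
def eqnVars {S : Sig} (E : Set (Eqn S)) : Set ℕ :=
  {x | ∃ e ∈ E, Term.Occurs S x e.1 ∨ Term.Occurs S x e.2}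

/-- `E` is a finite set of equations between finite (syntactic) terms. -/
def EqnSetFin {S : Sig} (E : Set (Eqn S)) : Prop :=
  E.Finite ∧ ∀ e ∈ E, Term.IsFinite S e.1 ∧ Term.IsFinite S e.2

/-- `sol E` : the set of solutions of `E`, i.e. ground substitutions defined on all
variables of `E` that unify all the equations in `E`. -/
def sol {S : Sig} (E : Set (Eqn S)) : Set (Subst S) :=
  {σ | σ.Ground ∧ eqnVars E ⊆ σ.dom ∧ ∀ e ∈ E, e.1.subst σ = e.2.subst σ}

/-- `E` is solvable. -/
def Solvable {S : Sig} (E : Set (Eqn S)) : Prop := (sol E).Nonempty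

/-- `eqs(A,B)` : the equations between the corresponding arguments of two atoms
with the same predicate symbol. -/
def atomEqs {S : Sig} (A B : Atom S) : Set (Eqn S) :=
  {e | ∃ (h : A.pred = B.pred) (i : Fin (S.par A.pred)),
        e = (A.args i, B.args (Fin.cast (congrArg S.par h) i))}

/-- Variables occurring in a set of atoms. -/
def atomsVars {S : Sig} (H : Set (Atom S)) : Set ℕ := {x | ∃ A ∈ H, Atom.Occurs x A}

/-- Variables occurring in a sequence of atoms (a goal). -/
def goalVars {S : Sig} (G : List (Atom S)) : Set ℕ := {x | ∃ A ∈ G, Atom.Occurs x A}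

/-- `ρ` is a renaming of the variables of clause `C` to fresh variables avoiding `avoid`:
it maps (injectively) every variable of `C` to a variable not in `avoid`. -/
def FreshRenamingFor {S : Sig} (ρ : Subst S) (C : Clause S) (avoid : Set ℕ) : Prop :=
  (∀ x t, ρ.toFun x = some t → ∃ y, t = Term.var S y ∧ y ∉ avoid) ∧
  clauseVars C ⊆ ρ.dom ∧
  (∀ x y, ρ.toFun x = ρ.toFun y → (ρ.toFun x).isSome → x = y)

/-- The big-step operational semantics judgment `P;coP ⊢ H : ⟨G | E⟩ ⇒ E'` of
flexible coSLD resolution, inductively defined by the rules (empty), (co-hyp), (step). -/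
inductive OpSem (S : Sig) :
    Set (Clause S) → Set (Clause S) → Set (Atom S) → List (Atom S) →
      Set (Eqn S) → Set (Eqn S) → Prop
  | empty (P coP : Set (Clause S)) (H : Set (Atom S)) (E : Set (Eqn S)) :
      OpSem S P coP H [] E E
  | cohyp {P coP : Set (Clause S)} {H : Set (Atom S)} {G1 G2 : List (Atom S)}
      {A B : Atom S} {E1 E2 E3 : Set (Eqn S)} :
      coP ≠ ∅ → B ∈ H → A.pred = B.pred →
      Solvable (E1 ∪ atomEqs A B) →
      OpSem S (P ∪ coP) ∅ ∅ [A] (E1 ∪ atomEqs A B) E2 →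
      OpSem S P coP H (G1 ++ G2) E2 E3 →
      OpSem S P coP H (G1 ++ A :: G2) E1 E3
  | step {P coP : Set (Clause S)} {H : Set (Atom S)} {G1 G2 : List (Atom S)}
      {A : Atom S} {E1 E2 E3 : Set (Eqn S)} (C : Clause S) (ρ : Subst S) :
      C ∈ P →
      FreshRenamingFor ρ C (eqnVars E1 ∪ atomsVars H ∪ goalVars (G1 ++ A :: G2)) →
      A.pred = C.head.pred →
      Solvable (E1 ∪ atomEqs A (C.head.subst ρ)) →
      OpSem S P coP (H ∪ {A}) (C.body.map (fun B => B.subst ρ))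
        (E1 ∪ atomEqs A (C.head.subst ρ)) E2 →
      OpSem S P coP H (G1 ++ G2) E2 E3 →
      OpSem S P coP H (G1 ++ A :: G2) E1 E3

/-- `Ans(G,E,I)` : the set of answers to the goal `⟨G | E⟩` correct in the
interpretation `I`. -/
def Ans {S : Sig} (G : List (Atom S)) (E : Set (Eqn S)) (I : Set (Atom S)) :
    Set (Subst S) :=
  {σ | σ ∈ sol E ∧ goalVars G ⊆ σ.dom ∧ ∀ A ∈ G, A.subst σ ∈ I}

/-- The inductive interpretation of the inference system `Loop(P,coP)`, whose judgments
`H ⊢ A` pair a ground atom with a set of ground atoms (circular hypotheses);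
rules: (hp) `H ⊢ A` if `A ∈ H` and `A ∈ Ind (P ∪ coP)`;
(rule) from `H∪{A} ⊢ B` for every premise `B` of a ground instance of a clause of `P`
with conclusion `A`, infer `H ⊢ A`. -/
inductive LoopInd {S : Sig} (P coP : Set (Clause S)) : Set (Atom S) → Atom S → Prop
  | hp {H : Set (Atom S)} {A : Atom S} :
      A ∈ H → A ∈ Ind (P ∪ coP) → LoopInd P coP H A
  | rule {H : Set (Atom S)} {A : Atom S} (r : Atom S × List (Atom S)) :
      r ∈ GroundInst P → r.1 = A →
      (∀ B ∈ r.2, LoopInd P coP (H ∪ {A}) B) →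
      LoopInd P coP H A

/-!
Under a solution `σ` of its output equations, a derivation of `OpSem` becomes a derivation in the
inference system `Loop(P,coP)` (`LoopInd`) with hypotheses `Hσ`: a (step) becomes a (rule) on the
ground instance of the clause obtained by composing the fresh renaming with `σ`, and a (co-hyp)
becomes an (hp) leaf, whose side condition `Aσ ∈ Ind(P ∪ coP)` is the soundness of plain SLD
resolution for `P ∪ coP`. The atoms derivable in `Loop(P,coP)` from no hypotheses lie in
`Ind(P ∪ coP)` and form a comodel of `P`: cutting the circular hypothesis `A` of the premises of a
(rule) against the derivation of `A` itself leaves derivations from no hypotheses. Hence they lie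
in `FlexCo(P,coP)`.
-/

open PFunctor

variable {S : Sig}

namespace Term

def app (f : S.Func) (ts : Fin (S.far f) → Term S) : Term S := M.mk ⟨Sum.inl f, ts⟩

theorem dest_var (x : ℕ) : M.dest (Term.var S x) = ⟨Sum.inr x, Fin.elim0⟩ := rfl

theorem mk_inr_eq_var (x : ℕ) (ts : (TermP S).B (Sum.inr x) → Term S) :
    M.mk ⟨Sum.inr x, ts⟩ = Term.var S x := by
  unfold Term.var
  congr
  funext i
  exact i.elim0

theorem eq_app_or_eq_var (t : Term S) : (∃ f ts, t = app f ts) ∨ ∃ x, t = Term.var S x := by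
  rw [← M.mk_dest t]
  rcases M.dest t with ⟨f | x, ts⟩
  · exact .inl ⟨f, ts, rfl⟩
  · exact .inr ⟨x, mk_inr_eq_var x ts⟩

theorem occurs_var_self (x : ℕ) : Term.Occurs S x (Term.var S x) := .root _ rfl

theorem occurs_app {x : ℕ} {f : S.Func} {ts : Fin (S.far f) → Term S} (i : Fin (S.far f))
    (h : Term.Occurs S x (ts i)) : Term.Occurs S x (app f ts) :=
  .child _ i h

variable {σ : Subst S}

theorem corec_substStep_false (t : Term S) : M.corec (substStep S σ) (t, false) = t := by
  apply M.bisim (fun u v => u = M.corec (substStep S σ) (v, false)) _ _ _ rfl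
  rintro _ w rfl
  rcases hw : M.dest w with ⟨l, ch⟩
  refine ⟨l, fun i => M.corec (substStep S σ) (ch i, false), ch, ?_, rfl, fun i => rfl⟩
  rw [M.dest_corec]
  cases l <;> simp only [substStep, hw] <;> rfl

theorem app_subst (f : S.Func) (ts : Fin (S.far f) → Term S) :
    (app f ts).subst σ = app f fun i => (ts i).subst σ := by
  rw [Term.subst, M.corec_def]
  rfl

theorem var_subst_of_some {x : ℕ} {s : Term S} (hx : σ.toFun x = some s) :
    (Term.var S x).subst σ = s := by
  rw [Term.subst, M.corec_def]
  conv_rhs => rw [← M.mk_dest s]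
  simp only [substStep, dest_var, hx]
  rcases M.dest s with ⟨l, ch⟩
  exact congrArg (M.mk ∘ Sigma.mk l) (funext fun i => corec_substStep_false (ch i))

theorem var_subst_of_none {x : ℕ} (hx : σ.toFun x = none) :
    (Term.var S x).subst σ = Term.var S x := by
  rw [Term.subst, M.corec_def]
  simp only [substStep, dest_var, hx]
  exact mk_inr_eq_var x _

theorem occurs_subst {x : ℕ} {t : Term S} (h : Term.Occurs S x (t.subst σ)) :
    (Term.Occurs S x t ∧ σ.toFun x = none) ∨ ∃ y s, σ.toFun y = some s ∧ Term.Occurs S x s := by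
  generalize hu : t.subst σ = u at h
  induction h generalizing t with
  | root u hroot =>
    rcases eq_app_or_eq_var t with ⟨f, ts, rfl⟩ | ⟨y, rfl⟩
    · rw [app_subst] at hu
      subst hu
      cases hroot
    rcases hy : σ.toFun y with _ | s
    · rw [var_subst_of_none hy] at hu
      subst hu
      obtain rfl : y = x := Sum.inr_injective hroot
      exact .inl ⟨occurs_var_self y, hy⟩
    · rw [var_subst_of_some hy] at hu
      subst hu
      exact .inr ⟨y, s, hy, .root _ hroot⟩
  | child u i hi IH =>
    rcases eq_app_or_eq_var t with ⟨f, ts, rfl⟩ | ⟨y, rfl⟩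
    · rw [app_subst] at hu
      subst hu
      exact (IH (t := ts i) rfl).imp_left fun ⟨hx, hσ⟩ => ⟨occurs_app i hx, hσ⟩
    rcases hy : σ.toFun y with _ | s
    · rw [var_subst_of_none hy] at hu
      subst hu
      exact Fin.elim0 i
    · rw [var_subst_of_some hy] at hu
      subst hu
      exact .inr ⟨y, s, hy, .child _ i hi⟩

theorem occurs_subst_of_occurs {x y : ℕ} {t s : Term S} (ht : Term.Occurs S x t)
    (hx : σ.toFun x = some s) (hy : Term.Occurs S y s) : Term.Occurs S y (t.subst σ) := by
  induction ht with
  | root t hroot =>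
    rcases eq_app_or_eq_var t with ⟨f, ts, rfl⟩ | ⟨z, rfl⟩
    · cases hroot
    obtain rfl : z = x := Sum.inr_injective hroot
    rwa [var_subst_of_some hx]
  | child t i _ IH =>
    rcases eq_app_or_eq_var t with ⟨f, ts, rfl⟩ | ⟨z, rfl⟩
    · rw [app_subst]
      exact occurs_app i IH
    · exact Fin.elim0 i

theorem ground_subst (hσ : σ.Ground) {t : Term S} (ht : ∀ x, Term.Occurs S x t → x ∈ σ.dom) :
    Term.Ground S (t.subst σ) := by
  intro x hx
  rcases occurs_subst hx with ⟨hxt, hxσ⟩ | ⟨y, s, hy, hxs⟩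
  · simpa [Subst.dom, hxσ] using ht x hxt
  · exact hσ y s hy x hxs

end Term

namespace Subst

/-- `ρ.compRen σ` sends `x` to `σ y` when `ρ` renames `x` to the variable `y`, and is undefined
elsewhere; unlike the composition of arbitrary substitutions it is ground whenever `σ` is. -/
def compRen (ρ σ : Subst S) : Subst S where
  toFun x := (ρ.toFun x).bind fun r =>
    match (M.dest r).1 with
    | .inr y => σ.toFun y
    | .inl _ => none
  finDom := ρ.finDom.subset fun x hx => by
    simp only [Set.mem_ofPred_eq, Option.isSome_bind] at hx ⊢
    exact Option.isSome_of_any hx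

variable {ρ σ : Subst S}

theorem compRen_toFun_of_var {x y : ℕ} (hx : ρ.toFun x = some (Term.var S y)) :
    (ρ.compRen σ).toFun x = σ.toFun y := by
  simp only [compRen, hx, Option.bind_some]
  rfl

theorem compRen_ground (hσ : σ.Ground) : (ρ.compRen σ).Ground := by
  intro x s hx
  simp only [compRen, Option.bind_eq_some_iff] at hx
  obtain ⟨r, -, hr⟩ := hx
  split at hr
  · exact hσ _ s hr
  · cases hr

end Subst

theorem Term.subst_subst_compRen {ρ σ : Subst S} {t : Term S} (ht : Term.IsFinite S t)
    (hρ : ∀ x, Term.Occurs S x t → ∃ y, ρ.toFun x = some (Term.var S y) ∧ y ∈ σ.dom) :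
    (t.subst ρ).subst σ = t.subst (ρ.compRen σ) := by
  induction ht with
  | mk t _ IH =>
    rcases Term.eq_app_or_eq_var t with ⟨f, ts, rfl⟩ | ⟨x, rfl⟩
    · simp only [Term.app_subst]
      exact congrArg _ (funext fun i => IH i fun x hx => hρ x (Term.occurs_app i hx))
    obtain ⟨y, hxy, hy⟩ := hρ x (Term.occurs_var_self x)
    obtain ⟨s, hs⟩ := Option.isSome_iff_exists.1 hy
    rw [Term.var_subst_of_some hxy, Term.var_subst_of_some hs,
      Term.var_subst_of_some (by rw [Subst.compRen_toFun_of_var hxy, hs])]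

namespace Atom

variable {σ ρ : Subst S}

theorem subst_eq_subst_of_eqs {A B : Atom S} (h : A.pred = B.pred)
    (hσ : ∀ e ∈ atomEqs A B, e.1.subst σ = e.2.subst σ) : A.subst σ = B.subst σ := by
  obtain ⟨p, as⟩ := A
  obtain ⟨q, bs⟩ := B
  obtain rfl : p = q := h
  exact congrArg (Atom.mk p) (funext fun i => hσ _ ⟨rfl, i, rfl⟩)

theorem subst_subst_compRen {A : Atom S} (hA : A.IsFinite)
    (hρ : ∀ x, A.Occurs x → ∃ y, ρ.toFun x = some (Term.var S y) ∧ y ∈ σ.dom) :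
    (A.subst ρ).subst σ = A.subst (ρ.compRen σ) :=
  congrArg (Atom.mk A.pred)
    (funext fun i => Term.subst_subst_compRen (hA i) fun x hx => hρ x ⟨i, hx⟩)

theorem ground_subst (hσ : σ.Ground) {A : Atom S} (hA : ∀ x, A.Occurs x → x ∈ σ.dom) :
    (A.subst σ).Ground :=
  fun i => Term.ground_subst hσ fun x hx => hA x ⟨i, hx⟩

theorem occurs_subst_of_occurs {x y : ℕ} {A : Atom S} {s : Term S} (hA : A.Occurs x)
    (hx : σ.toFun x = some s) (hy : Term.Occurs S y s) : (A.subst σ).Occurs y :=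
  let ⟨i, hi⟩ := hA
  ⟨i, Term.occurs_subst_of_occurs hi hx hy⟩

end Atom

theorem eqnVars_mono {E F : Set (Eqn S)} (h : E ⊆ F) : eqnVars E ⊆ eqnVars F :=
  fun _ ⟨e, he, hx⟩ => ⟨e, h he, hx⟩

theorem sol_anti {E F : Set (Eqn S)} (h : E ⊆ F) : sol F ⊆ sol E :=
  fun _ ⟨hg, hdom, hsol⟩ => ⟨hg, (eqnVars_mono h).trans hdom, fun e he => hsol e (h he)⟩

theorem mem_eqnVars_atomEqs_left {A B : Atom S} (h : A.pred = B.pred) {x : ℕ}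
    (hx : A.Occurs x) : x ∈ eqnVars (atomEqs A B) :=
  let ⟨i, hi⟩ := hx
  ⟨_, ⟨h, i, rfl⟩, .inl hi⟩

theorem mem_eqnVars_atomEqs_right {A B : Atom S} (h : A.pred = B.pred) {x : ℕ}
    (hx : B.Occurs x) : x ∈ eqnVars (atomEqs A B) := by
  obtain ⟨p, as⟩ := A
  obtain ⟨q, bs⟩ := B
  obtain rfl : p = q := h
  obtain ⟨i, hi⟩ := hx
  exact ⟨_, ⟨rfl, i, rfl⟩, .inr (by simpa using hi)⟩

theorem GroundInst_mono {P Q : Set (Clause S)} (h : P ⊆ Q) : GroundInst P ⊆ GroundInst Q :=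
  fun _ ⟨C, hC, hr⟩ => ⟨C, h hC, hr⟩

theorem isModel_Ind (P : Set (Clause S)) : IsModel P (Ind P) :=
  fun _ ⟨r, hr, hA, hprem⟩ => Set.mem_sInter.2 fun _ hI =>
    hI ⟨r, hr, hA, fun B hB => Set.mem_sInter.1 (hprem B hB) _ hI⟩

namespace LoopInd

variable {P R : Set (Clause S)} {H : Set (Atom S)} {A B : Atom S}

theorem mono (h : LoopInd P R H A) {H' : Set (Atom S)} (hH : H ⊆ H') : LoopInd P R H' A := by
  induction h generalizing H' with
  | hp hA hInd => exact .hp (hH hA) hInd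
  | rule r hr hA _ IH => exact .rule r hr hA fun B hB => IH B hB (Set.union_subset_union_left _ hH)

theorem cut (hB : LoopInd P R (H ∪ {A}) B) (hA : LoopInd P R H A) : LoopInd P R H B := by
  generalize hH : H ∪ {A} = H₁ at hB
  induction hB generalizing H with
  | hp hB hInd =>
    subst hH
    rcases hB with hB | rfl
    · exact .hp hB hInd
    · exact hA
  | @rule _ C r hr hC _ IH =>
    subst hH
    exact .rule r hr hC fun B hB =>
      IH B hB (hA.mono Set.subset_union_left) (Set.union_right_comm H {C} {A})

theorem mem_Ind (h : LoopInd P R H A) : A ∈ Ind (P ∪ R) := by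
  induction h with
  | hp _ hInd => exact hInd
  | rule r hr hA _ IH =>
    exact isModel_Ind (P ∪ R) ⟨r, GroundInst_mono Set.subset_union_left hr, hA, IH⟩

theorem isComodel_setOf : IsComodel P {A | LoopInd P R ∅ A} := by
  intro A hA
  cases id hA with
  | hp hmem _ => exact absurd hmem (Set.notMem_empty A)
  | rule r hr hrA hprem => exact ⟨r, hr, hrA, fun B hB => (hprem B hB).cut hA⟩

theorem mem_FlexCo (h : LoopInd P R ∅ A) : A ∈ FlexCo P R :=
  ⟨_, ⟨isComodel_setOf, fun _ => mem_Ind⟩, h⟩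

end LoopInd

theorem mem_GroundInst_of_unifier {P : Set (Clause S)} {C : Clause S} {ρ σ : Subst S}
    {A : Atom S} {avoid : Set ℕ} (hC : C ∈ P) (hρ : FreshRenamingFor ρ C avoid)
    (hpred : A.pred = C.head.pred) (hσ : σ ∈ sol (atomEqs A (C.head.subst ρ)))
    (hbody : goalVars (C.body.map (·.subst ρ)) ⊆ σ.dom) :
    (A.subst σ, (C.body.map (·.subst ρ)).map (·.subst σ)) ∈ GroundInst P := by
  have hren : ∀ x ∈ clauseVars C, ∃ y, ρ.toFun x = some (Term.var S y) ∧ y ∈ σ.dom := by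
    intro x hx
    obtain ⟨r, hr⟩ := Option.isSome_iff_exists.1 (hρ.2.1 hx)
    obtain ⟨y, rfl, -⟩ := hρ.1 x r hr
    refine ⟨y, hr, ?_⟩
    rcases hx with hx | ⟨B, hB, hx⟩
    · exact hσ.2.1 (mem_eqnVars_atomEqs_right (B := C.head.subst ρ) hpred
        (Atom.occurs_subst_of_occurs hx hr (Term.occurs_var_self y)))
    · exact hbody ⟨_, List.mem_map_of_mem hB,
        Atom.occurs_subst_of_occurs hx hr (Term.occurs_var_self y)⟩
  set τ := ρ.compRen σ
  have hτdom : ∀ x ∈ clauseVars C, x ∈ τ.dom := fun x hx => by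
    obtain ⟨y, hxy, hy⟩ := hren x hx
    rwa [Subst.dom, Set.mem_ofPred_eq, Subst.compRen_toFun_of_var hxy]
  have hhead : A.subst σ = C.head.subst τ :=
    (Atom.subst_eq_subst_of_eqs (B := C.head.subst ρ) hpred hσ.2.2).trans
      (Atom.subst_subst_compRen C.finHead fun x hx => hren x (.inl hx))
  have hbody' : ∀ B ∈ C.body, (B.subst ρ).subst σ = B.subst τ := fun B hB =>
    Atom.subst_subst_compRen (C.finBody B hB) fun x hx => hren x (.inr ⟨B, hB, hx⟩)
  have hτ : τ.Ground := Subst.compRen_ground hσ.1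
  refine ⟨C, hC, τ, hτ, hhead, ?_, ?_, ?_⟩
  · rw [List.map_map]
    exact List.map_congr_left hbody'
  · show (A.subst σ).Ground
    rw [hhead]
    exact Atom.ground_subst hτ fun x hx => hτdom x (.inl hx)
  · simp only [List.map_map, List.mem_map, Function.comp_apply]
    rintro _ ⟨B, hB, rfl⟩
    rw [hbody' B hB]
    exact Atom.ground_subst hτ fun x hx => hτdom x (.inr ⟨B, hB, hx⟩)

namespace OpSem

variable {P R : Set (Clause S)} {H : Set (Atom S)} {G : List (Atom S)} {E E' : Set (Eqn S)}

theorem subset (h : OpSem S P R H G E E') : E ⊆ E' := by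
  induction h with
  | empty => exact subset_rfl
  | cohyp _ _ _ _ _ _ IH₁ IH₂ | step _ _ _ _ _ _ _ _ IH₁ IH₂ =>
    exact (Set.subset_union_left.trans IH₁).trans IH₂

theorem goalVars_subset (h : OpSem S P R H G E E') : goalVars G ⊆ eqnVars E' := by
  induction h with
  | empty => rintro x ⟨A, hA, -⟩; cases hA
  | cohyp _ _ _ _ _ h₂ IH₁ IH₂ =>
    rintro x ⟨A', hA', hx⟩
    obtain rfl | hA' := List.mem_cons.1 (List.perm_middle.mem_iff.1 hA')
    · exact eqnVars_mono h₂.subset (IH₁ ⟨A', List.mem_singleton_self A', hx⟩)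
    · exact IH₂ ⟨A', hA', hx⟩
  | step C ρ _ _ hpred _ h₁ h₂ _ IH₂ =>
    rintro x ⟨A', hA', hx⟩
    obtain rfl | hA' := List.mem_cons.1 (List.perm_middle.mem_iff.1 hA')
    · exact eqnVars_mono (Set.subset_union_right.trans (h₁.subset.trans h₂.subset))
        (mem_eqnVars_atomEqs_left (B := C.head.subst ρ) hpred hx)
    · exact IH₂ ⟨A', hA', hx⟩

theorem mem_GroundInst_of_step {C : Clause S} {ρ σ : Subst S} {A : Atom S} {avoid : Set ℕ}
    {E₁ E₂ : Set (Eqn S)} (hC : C ∈ P) (hρ : FreshRenamingFor ρ C avoid)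
    (hpred : A.pred = C.head.pred)
    (h : OpSem S P R H (C.body.map (·.subst ρ)) (E₁ ∪ atomEqs A (C.head.subst ρ)) E₂)
    (hσ : σ ∈ sol E₂) :
    (A.subst σ, (C.body.map (·.subst ρ)).map (·.subst σ)) ∈ GroundInst P :=
  mem_GroundInst_of_unifier hC hρ hpred (sol_anti (Set.subset_union_right.trans h.subset) hσ)
    (h.goalVars_subset.trans hσ.2.1)

theorem subst_mem_Ind (h : OpSem S P ∅ H G E E') {σ : Subst S} (hσ : σ ∈ sol E') :
    ∀ A ∈ G, A.subst σ ∈ Ind P := by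
  generalize hR : (∅ : Set (Clause S)) = R at h
  induction h with
  | empty => simp
  | cohyp hne => exact absurd hR.symm hne
  | step C ρ hC hρ hpred _ h₁ h₂ IH₁ IH₂ =>
    intro A' hA'
    obtain rfl | hA' := List.mem_cons.1 (List.perm_middle.mem_iff.1 hA')
    · have hσ₂ := sol_anti h₂.subset hσ
      refine isModel_Ind _ ⟨_, h₁.mem_GroundInst_of_step hC hρ hpred hσ₂, rfl, ?_⟩
      rw [List.forall_mem_map]
      exact IH₁ hσ₂ hR
    · exact IH₂ hσ hR A' hA'

theorem loopInd (h : OpSem S P R H G E E') {σ : Subst S} (hσ : σ ∈ sol E') :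
    ∀ A ∈ G, LoopInd P R ((·.subst σ) '' H) (A.subst σ) := by
  induction h with
  | empty => simp
  | @cohyp _ _ _ _ _ _ B _ _ _ _ hB hpred _ h₁ h₂ _ IH₂ =>
    intro A' hA'
    obtain rfl | hA' := List.mem_cons.1 (List.perm_middle.mem_iff.1 hA')
    · have hσ₂ := sol_anti h₂.subset hσ
      have hAB : A'.subst σ = B.subst σ :=
        Atom.subst_eq_subst_of_eqs hpred fun e he => hσ₂.2.2 e (h₁.subset (.inr he))
      exact .hp ⟨B, hB, hAB.symm⟩ (h₁.subst_mem_Ind hσ₂ A' (List.mem_singleton_self A'))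
    · exact IH₂ hσ A' hA'
  | step C ρ hC hρ hpred _ h₁ h₂ IH₁ IH₂ =>
    intro A' hA'
    obtain rfl | hA' := List.mem_cons.1 (List.perm_middle.mem_iff.1 hA')
    · have hσ₂ := sol_anti h₂.subset hσ
      refine .rule _ (h₁.mem_GroundInst_of_step hC hρ hpred hσ₂) rfl ?_
      rw [List.forall_mem_map]
      intro B hB
      simpa only [Set.image_union, Set.image_singleton] using IH₁ hσ₂ B hB
    · exact IH₂ hσ A' hA'

end OpSem

theorem soundness_wrt_declarative_semantics_general (S : Sig) (P coP : Set (Clause S))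
    (G : List (Atom S)) (E E' : Set (Eqn S)) (h : OpSem S P coP ∅ G E E') :
    sol E' ⊆ Ans G E (FlexCo P coP) := by
  intro σ hσ
  refine ⟨sol_anti h.subset hσ, h.goalVars_subset.trans hσ.2.1, fun A hA => ?_⟩
  exact LoopInd.mem_FlexCo (by simpa only [Set.image_empty] using h.loopInd hσ A hA)

/-- Soundness of flexible coSLD resolution w.r.t. the declarative semantics:
every solution of the output equations is an answer to the goal correct in `FlexCo(P,coP)`. -/
theorem soundness_wrt_declarative_semantics (S : Sig) (P coP : Set (Clause S))
    (hP : P.Finite) (hcoP : coP.Finite)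
    (G : List (Atom S)) (hG : ∀ A ∈ G, A.IsFinite)
    (E E' : Set (Eqn S)) (hE : EqnSetFin E) (hE' : EqnSetFin E')
    (h : OpSem S P coP ∅ G E E') :
    sol E' ⊆ Ans G E (FlexCo P coP) :=
  soundness_wrt_declarative_semantics_general S P coP G E E' h

end FlexLP
end

section
/- The inductive declarative semantics coincides with the regular semantics in absence of coclauses: for every logic program P, Ind(P) = FlexReg(P,∅), i.e. the least model of P equals the union of all finite comodels of P included in Ind(P). -/
/- Framework: flexible coinductive logic programming (logic programs with coclauses).
   Terms are possibly infinite trees, modelled as M-types of a polynomial functor. -/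

namespace FlexLP

inductive Derivable {S : Sig} (P : Set (Clause S)) : Atom S → Prop
  | mk (r : Atom S × List (Atom S)) : r ∈ GroundInst P → (∀ B ∈ r.2, Derivable P B) →
      Derivable P r.1

section

variable {S : Sig} {P : Set (Clause S)}

theorem TP_mono {I J : Set (Atom S)} (h : I ⊆ J) : TP P I ⊆ TP P J :=
  fun _ ⟨r, hr, hA, hprem⟩ => ⟨r, hr, hA, fun B hB => h (hprem B hB)⟩

theorem isComodel_iUnion {ι : Sort*} {I : ι → Set (Atom S)} (h : ∀ i, IsComodel P (I i)) :
    IsComodel P (⋃ i, I i) := by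
  intro A hA
  obtain ⟨i, hAi⟩ := Set.mem_iUnion.1 hA
  exact TP_mono (Set.subset_iUnion I i) (h i hAi)

theorem IsComodel.insert {I : Set (Atom S)} {A : Atom S} (hI : IsComodel P I)
    (hA : A ∈ TP P I) : IsComodel P (insert A I) := by
  rintro B (rfl | hB)
  · exact TP_mono (Set.subset_insert B I) hA
  · exact TP_mono (Set.subset_insert A I) (hI hB)

theorem Derivable.mem_of_isModel {I : Set (Atom S)} (hI : IsModel P I) {A : Atom S}
    (h : Derivable P A) : A ∈ I := by
  induction h with
  | mk r hr _ ih => exact hI ⟨r, hr, rfl, ih⟩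

theorem isModel_setOf_derivable : IsModel P {A | Derivable P A} :=
  fun _ ⟨r, hr, hA, hprem⟩ => hA ▸ Derivable.mk r hr hprem

theorem ind_eq_setOf_derivable : Ind P = {A | Derivable P A} :=
  Set.Subset.antisymm (fun _ hA => hA _ isModel_setOf_derivable)
    (fun _ hA _ hI => hA.mem_of_isModel hI)

/-- The atoms of a finite proof tree of `A` form a finite comodel. -/
theorem Derivable.exists_finite_comodel {A : Atom S} (h : Derivable P A) :
    ∃ I : Set (Atom S), I.Finite ∧ IsComodel P I ∧ I ⊆ {B | Derivable P B} ∧ A ∈ I := by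
  induction h with
  | mk r hr hprem ih =>
    choose! J hJfin hJco hJder hJmem using ih
    have hfin : (⋃ B ∈ r.2, J B).Finite := r.2.finite_toSet.biUnion hJfin
    have hco : IsComodel P (⋃ B ∈ r.2, J B) :=
      isComodel_iUnion fun B => isComodel_iUnion fun hB => hJco B hB
    have hhead : r.1 ∈ TP P (⋃ B ∈ r.2, J B) :=
      ⟨r, hr, rfl, fun B hB => Set.mem_biUnion hB (hJmem B hB)⟩
    refine ⟨insert r.1 (⋃ B ∈ r.2, J B), hfin.insert _, hco.insert hhead, ?_,
      Set.mem_insert _ _⟩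
    rintro B (rfl | hB)
    · exact Derivable.mk r hr hprem
    · obtain ⟨C, hC, hBC⟩ := Set.mem_iUnion₂.1 hB
      exact hJder C hC hBC

theorem flexReg_subset_ind (coP : Set (Clause S)) : FlexReg P coP ⊆ Ind (P ∪ coP) :=
  Set.sUnion_subset fun _ hI => hI.2.2

end

theorem ind_eq_flexreg_of_no_coclauses_general (S : Sig) (P : Set (Clause S)) :
    Ind P = FlexReg P ∅ := by
  refine Set.Subset.antisymm (fun A hA => ?_)
    (by simpa only [Set.union_empty] using flexReg_subset_ind (P := P) ∅)
  rw [ind_eq_setOf_derivable] at hA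
  obtain ⟨I, hfin, hco, hder, hAI⟩ := hA.exists_finite_comodel
  refine ⟨I, ⟨hfin, hco, ?_⟩, hAI⟩
  rw [Set.union_empty, ind_eq_setOf_derivable]
  exact hder

/-- The inductive declarative semantics coincides with the regular semantics in absence
of coclauses: the least model of `P` is the union of all finite comodels of `P`
included in `Ind P`. -/
theorem ind_eq_flexreg_of_no_coclauses (S : Sig) (P : Set (Clause S)) (hP : P.Finite) :
    Ind P = FlexReg P ∅ :=
  ind_eq_flexreg_of_no_coclauses_general S P

end FlexLP
end
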